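/- arXiv:1601.04454 — 4 statements merged into one kernel-verified Lean document; each statement's English description precedes it below -/
import Mathlib

section
/- Let $d \geq 4$ and let $a$ be a sufficiently large positive integer. Then for all $k$ with $1 \leq k \leq \lfloor d/2 \rfloor - 1$, we have $\binom{d-1}{k}a^k + \binom{d-1}{d-k}a^{d-k} > \binom{d-1}{k+1}a^{k+1} + \binom{d-1}{d-k-1}a^{d-k-1}$. -/
lemma choose_le_two_pow' (n k : ℕ) : Nat.choose n k ≤ 2 ^ n := by
  rcases le_or_gt k n with h | h
  · calc Nat.choose n k ≤ ∑ m ∈ Finset.range (n + 1), n.choose m :=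
        Finset.single_le_sum (fun i _ => Nat.zero_le _) (Finset.mem_range.mpr (by omega))
    _ = 2 ^ n := Nat.sum_range_choose n
  · simp [Nat.choose_eq_zero_of_lt h]

/-- For `d ≥ 4` and `a` sufficiently large, for all `1 ≤ k ≤ ⌊d/2⌋ - 1`,
`C(d-1,k)·a^k + C(d-1,d-k)·a^(d-k) > C(d-1,k+1)·a^(k+1) + C(d-1,d-k-1)·a^(d-k-1)`. -/
theorem turan_hilbert_inequality (d : ℕ) (hd : 4 ≤ d) :
    ∃ N : ℕ, ∀ a : ℕ, N ≤ a → ∀ k : ℕ, 1 ≤ k → k ≤ d / 2 - 1 →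
      Nat.choose (d - 1) k * a ^ k + Nat.choose (d - 1) (d - k) * a ^ (d - k) >
        Nat.choose (d - 1) (k + 1) * a ^ (k + 1) +
          Nat.choose (d - 1) (d - k - 1) * a ^ (d - k - 1) := by
  refine ⟨2 ^ d + 1, fun a ha k hk1 hk2 => ?_⟩
  have hkd : 2 * (k + 1) ≤ d := by omega
  have ha1 : 1 ≤ a := by
    have : 1 ≤ 2 ^ d := Nat.one_le_two_pow
    omega
  have hpow : a ^ (k + 1) ≤ a ^ (d - k - 1) :=
    Nat.pow_le_pow_right ha1 (by omega)
  have hb1 : Nat.choose (d - 1) (k + 1) ≤ 2 ^ (d - 1) := choose_le_two_pow' _ _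
  have hb2 : Nat.choose (d - 1) (d - k - 1) ≤ 2 ^ (d - 1) := choose_le_two_pow' _ _
  have hc : 1 ≤ Nat.choose (d - 1) (d - k) :=
    Nat.choose_pos (by omega)
  have key : Nat.choose (d - 1) (k + 1) * a ^ (k + 1) +
      Nat.choose (d - 1) (d - k - 1) * a ^ (d - k - 1) < a ^ (d - k) := by
    calc Nat.choose (d - 1) (k + 1) * a ^ (k + 1) +
        Nat.choose (d - 1) (d - k - 1) * a ^ (d - k - 1)
        ≤ 2 ^ (d - 1) * a ^ (d - k - 1) + 2 ^ (d - 1) * a ^ (d - k - 1) := by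
          gcongr
      _ = 2 ^ d * a ^ (d - k - 1) := by
          rw [← two_mul, ← mul_assoc, ← pow_succ']
          congr 2
          omega
      _ < a * a ^ (d - k - 1) := by
          have h2a : 2 ^ d < a := by omega
          exact Nat.mul_lt_mul_of_lt_of_le h2a le_rfl (Nat.pow_pos ha1)
      _ = a ^ (d - k) := by
          rw [← pow_succ']
          congr 1
          omega
  calc Nat.choose (d - 1) (k + 1) * a ^ (k + 1) +
      Nat.choose (d - 1) (d - k - 1) * a ^ (d - k - 1)
      < a ^ (d - k) := key
    _ ≤ Nat.choose (d - 1) (d - k) * a ^ (d - k) := Nat.le_mul_of_pos_left _ hc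
    _ ≤ _ := Nat.le_add_left _ _
end

section
/- Let $\Delta$ be a pure simplicial complex of dimension $d-2$ on vertices $u_1,\ldots,u_m$ with facets corresponding to square-free monomials $g_1,\ldots,g_n$ of degree $d-1$, and let $f = \sum_{i=1}^n x_i g_i \in \mathbb{K}[x_1,\ldots,x_n,u_1,\ldots,u_m]$ where $\mathbb{K}$ has characteristic zero. Then the square-free monomials $\Omega_1,\ldots,\Omega_s$ in the dual differential operators $U_1,\ldots,U_m$ corresponding to the $(k-1)$-faces of $\Delta$ give linearly independent elements $\Omega_1(f),\ldots,\Omega_s(f)$ of the polynomial ring. -/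
open MvPolynomial

/-- Iterated partial differentiation by a list of variables. -/
noncomputable def diffOpList {σ K : Type*} [CommSemiring K] (l : List σ)
    (p : MvPolynomial σ K) : MvPolynomial σ K :=
  l.foldr (fun i q => MvPolynomial.pderiv i q) p

section Aux

variable {K : Type} [Field K] {n m : ℕ}

/-- The exponent vector of `x i * ∏_{j ∈ T} u j`. -/
noncomputable def muAux (i : Fin n) (T : Finset (Fin m)) : (Fin n ⊕ Fin m) →₀ ℕ :=
  Finsupp.single (Sum.inl i) 1 + ∑ j ∈ T, Finsupp.single (Sum.inr j) 1

lemma muAux_apply_inr (i : Fin n) (T : Finset (Fin m)) (a : Fin m) :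
    muAux i T (Sum.inr a) = if a ∈ T then 1 else 0 := by
  simp [muAux, Finsupp.single_apply, Finset.sum_ite_eq, Finsupp.finset_sum_apply]

lemma muAux_apply_inl (i : Fin n) (T : Finset (Fin m)) (a : Fin n) :
    muAux i T (Sum.inl a) = if i = a then 1 else 0 := by
  simp [muAux, Finsupp.single_apply, Finsupp.finset_sum_apply]

lemma muAux_inj {i i' : Fin n} {T T' : Finset (Fin m)}
    (h : muAux i T = muAux i' T') : i = i' ∧ T = T' := by
  constructor
  · by_contra hne
    have := DFunLike.congr_fun h (Sum.inl i)
    rw [muAux_apply_inl, muAux_apply_inl, if_pos rfl, if_neg (fun hh => hne hh.symm)] at this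
    exact one_ne_zero this
  · ext a
    have := DFunLike.congr_fun h (Sum.inr a)
    simp only [muAux_apply_inr] at this
    by_cases hA : a ∈ T <;> by_cases hB : a ∈ T' <;> simp [hA, hB] at this ⊢

lemma muAux_sub (i : Fin n) (T : Finset (Fin m)) (a : Fin m) (ha : a ∈ T) :
    muAux i T - Finsupp.single (Sum.inr a) 1 = muAux i (T.erase a) := by
  ext x
  rw [Finsupp.tsub_apply]
  cases x with
  | inl b => simp [muAux_apply_inl, Finsupp.single_apply]
  | inr b =>
    rw [muAux_apply_inr, muAux_apply_inr, Finsupp.single_apply]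
    by_cases hb : b = a
    · subst hb; simp [ha]
    · simp [hb, Ne.symm hb, Finset.mem_erase]

lemma diffOpList_monomial (l : List (Fin m)) (hl : l.Nodup) (i : Fin n)
    (T : Finset (Fin m)) :
    diffOpList (l.map Sum.inr) (monomial (muAux i T) (1 : K)) =
      if l.toFinset ⊆ T then monomial (muAux i (T \ l.toFinset)) 1 else 0 := by
  induction l with
  | nil => simp [diffOpList]
  | cons a t ih =>
    have hat : a ∉ t := (List.nodup_cons.mp hl).1
    have ht : t.Nodup := (List.nodup_cons.mp hl).2
    have hstep : diffOpList ((a :: t).map Sum.inr) (monomial (muAux i T) (1 : K)) =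
        pderiv (Sum.inr a) (diffOpList (t.map Sum.inr) (monomial (muAux i T) (1 : K))) := rfl
    rw [hstep, ih ht]
    by_cases hsub : t.toFinset ⊆ T
    · rw [if_pos hsub, pderiv_monomial, muAux_apply_inr]
      by_cases ha : a ∈ T \ t.toFinset
      · have haT : a ∈ T := (Finset.mem_sdiff.mp ha).1
        have hset : (T \ t.toFinset).erase a = T \ (a :: t).toFinset := by
          ext x
          simp only [Finset.mem_erase, Finset.mem_sdiff, List.toFinset_cons,
            Finset.mem_insert]
          tauto
        rw [if_pos ha, muAux_sub i _ a ha, hset, if_pos]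
        · simp
        · intro x hx
          simp only [List.toFinset_cons, Finset.mem_insert] at hx
          rcases hx with rfl | hx
          · exact haT
          · exact hsub hx
      · have haT : a ∉ T := by
          intro h
          exact ha (Finset.mem_sdiff.mpr ⟨h, fun hh => hat (List.mem_toFinset.mp hh)⟩)
        rw [if_neg ha, if_neg]
        · simp
        · intro h
          exact haT (h (by simp))
    · rw [if_neg hsub, if_neg (fun h => hsub fun x hx => h (by simp [hx]))]
      simp

lemma diffOpList_sum {σ : Type*} (l : List σ) {ι : Type*} (s : Finset ι)
    (f : ι → MvPolynomial σ K) :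
    diffOpList l (∑ i ∈ s, f i) = ∑ i ∈ s, diffOpList l (f i) := by
  induction l with
  | nil => rfl
  | cons a t ih =>
    show pderiv a (diffOpList t _) = _
    rw [ih, map_sum]
    rfl

lemma prod_X_eq (S : Finset (Fin m)) :
    (∏ j ∈ S, (X (Sum.inr j) : MvPolynomial (Fin n ⊕ Fin m) K)) =
      monomial (∑ j ∈ S, Finsupp.single (Sum.inr j) 1) 1 := by
  induction S using Finset.induction_on with
  | empty => simp [monomial_zero']
  | insert _ _ ha ih =>
    rw [Finset.prod_insert ha, Finset.sum_insert ha, ih, X, monomial_mul, one_mul]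

lemma term_eq (i : Fin n) (T : Finset (Fin m)) :
    (X (Sum.inl i) * ∏ j ∈ T, (X (Sum.inr j) : MvPolynomial (Fin n ⊕ Fin m) K)) =
      monomial (muAux i T) 1 := by
  rw [prod_X_eq, X, monomial_mul, one_mul, muAux]

end Aux

/-- for `f = ∑ xᵢ gᵢ` of monomial square free type associated to a pure
simplicial complex `Δ` (facets `G i` of cardinality `d-1`), the polynomials `Ω(f)`,
where `Ω` ranges over the square-free monomial differential operators corresponding to
the `(k-1)`-faces of `Δ`, are linearly independent. -/
theorem faces_give_linearly_independent_derivatives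
    {K : Type} [Field K] [CharZero K] (n m d k : ℕ)
    (G : Fin n → Finset (Fin m)) (hG : Function.Injective G)
    (hcard : ∀ i, (G i).card = d - 1) (hd : 2 ≤ d) (hk : 1 ≤ k) (hkd : k ≤ d - 1) :
    LinearIndependent K
      (fun F : {F : Finset (Fin m) // F.card = k ∧ ∃ i, F ⊆ G i} =>
        diffOpList ((F : Finset (Fin m)).toList.map Sum.inr)
          (∑ i : Fin n, MvPolynomial.X (Sum.inl i) *
            ∏ j ∈ G i, MvPolynomial.X (Sum.inr j) :
              MvPolynomial (Fin n ⊕ Fin m) K)) := by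
  have key : ∀ F : Finset (Fin m),
      diffOpList (F.toList.map Sum.inr)
        (∑ i : Fin n, MvPolynomial.X (Sum.inl i) *
          ∏ j ∈ G i, MvPolynomial.X (Sum.inr j) : MvPolynomial (Fin n ⊕ Fin m) K) =
        ∑ i : Fin n, if F ⊆ G i then monomial (muAux i (G i \ F)) 1 else 0 := by
    intro F
    rw [diffOpList_sum]
    refine Finset.sum_congr rfl fun i _ => ?_
    rw [term_eq, diffOpList_monomial _ (Finset.nodup_toList F)]
    simp [Finset.toList_toFinset]
  rw [Fintype.linearIndependent_iff]
  intro g hg F₀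
  obtain ⟨hcardF₀, i₀, hFG₀⟩ := F₀.2
  classical
  have hval : ∀ F : {F : Finset (Fin m) // F.card = k ∧ ∃ i, F ⊆ G i},
      coeff (muAux i₀ (G i₀ \ F₀.1))
        (diffOpList ((F : Finset (Fin m)).toList.map Sum.inr)
          (∑ i : Fin n, MvPolynomial.X (Sum.inl i) *
            ∏ j ∈ G i, MvPolynomial.X (Sum.inr j) : MvPolynomial (Fin n ⊕ Fin m) K)) =
        if F = F₀ then 1 else 0 := by
    intro F
    rw [key, coeff_sum]
    have hterm : ∀ i : Fin n,
        coeff (muAux i₀ (G i₀ \ F₀.1))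
          (if F.1 ⊆ G i then monomial (muAux i (G i \ F.1)) (1 : K) else 0) =
        if i = i₀ ∧ F = F₀ then 1 else 0 := by
      intro i
      by_cases hsub : F.1 ⊆ G i
      · rw [if_pos hsub, coeff_monomial]
        by_cases heq : muAux i (G i \ F.1) = muAux i₀ (G i₀ \ F₀.1)
        · obtain ⟨hii, hTT⟩ := muAux_inj heq
          subst hii
          have hF : F.1 = F₀.1 := by
            have h1 : G i \ (G i \ F.1) = F.1 := Finset.sdiff_sdiff_eq_self hsub
            have h2 : G i \ (G i \ F₀.1) = F₀.1 := Finset.sdiff_sdiff_eq_self hFG₀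
            rw [← h1, hTT, h2]
          rw [if_pos heq, if_pos ⟨rfl, Subtype.ext hF⟩]
        · rw [if_neg heq, if_neg]
          rintro ⟨rfl, rfl⟩
          exact heq rfl
      · rw [if_neg hsub, coeff_zero, if_neg]
        rintro ⟨rfl, rfl⟩
        exact hsub hFG₀
    rw [Finset.sum_congr rfl fun i _ => hterm i]
    by_cases hFF : F = F₀
    · simp [hFF, Finset.sum_ite_eq']
    · simp [hFF]
  have hcoeff := congrArg (coeff (muAux i₀ (G i₀ \ F₀.1))) hg
  rw [coeff_zero, coeff_sum] at hcoeff
  simp only [coeff_smul, hval, smul_eq_mul, mul_ite, mul_one, mul_zero] at hcoeff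
  rwa [Finset.sum_ite_eq' Finset.univ F₀ g, if_pos (Finset.mem_univ F₀)] at hcoeff
end

section
/- If a standard graded Artinian Gorenstein algebra $A$ of socle degree $d$ has the Weak Lefschetz Property, then its Hilbert vector $(h_0, h_1, \ldots, h_d)$ is unimodal; in particular $h_{k-1} \leq h_k$ for all $k \leq d/2$. -/
/-- Multiplication by a degree-one element `L`, as a linear map `𝒜 i →ₗ 𝒜 (i+1)`. -/
noncomputable def gradedMulBy {K A : Type*} [Field K] [CommRing A] [Algebra K A]
    (𝒜 : ℕ → Submodule K A) [SetLike.GradedMonoid 𝒜] (L : A) (hL : L ∈ 𝒜 1) (i : ℕ) :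
    𝒜 i →ₗ[K] 𝒜 (i + 1) where
  toFun x := ⟨L * x.1, by simpa [add_comm] using SetLike.mul_mem_graded hL x.2⟩
  map_add' x y := by ext; simp [mul_add]
  map_smul' c x := by ext; simp [Algebra.mul_smul_comm]

/-- A nondegenerate-in-the-first-slot pairing into the field gives a dimension inequality. -/
lemma finrank_le_of_pairing {K V W : Type} [Field K] [AddCommGroup V] [Module K V]
    [AddCommGroup W] [Module K W] [FiniteDimensional K W]
    (B : V →ₗ[K] W →ₗ[K] K)
    (hB : ∀ v : V, v ≠ 0 → ∃ w, B v w ≠ 0) :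
    Module.finrank K V ≤ Module.finrank K W := by
  have hinj : Function.Injective B := by
    rw [← LinearMap.ker_eq_bot, Submodule.eq_bot_iff]
    intro v hv
    by_contra h
    obtain ⟨w, hw⟩ := hB v h
    rw [LinearMap.mem_ker] at hv
    exact hw (by simp [hv])
  calc Module.finrank K V ≤ Module.finrank K (W →ₗ[K] K) :=
        LinearMap.finrank_le_finrank_of_injective hinj
    _ = Module.finrank K W := Subspace.dual_finrank_eq

/-- if a standard graded Artinian Gorenstein algebra of socle degree `d`
has the Weak Lefschetz Property, then its Hilbert vector `h_i = dim A_i` is unimodal;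
in particular `h_{k-1} ≤ h_k` for all `k ≤ d/2`. -/
theorem wlp_implies_unimodal {K A : Type} [Field K] [CommRing A] [Algebra K A]
    (𝒜 : ℕ → Submodule K A) [SetLike.GradedMonoid 𝒜] [∀ i, FiniteDimensional K (𝒜 i)]
    (d : ℕ)
    (h0 : 𝒜 0 = 1)
    (hstd : ∀ j : ℕ, 𝒜 (j + 1) = 𝒜 1 * 𝒜 j)
    (hart : ∀ i, d < i → 𝒜 i = ⊥)
    (hsocle : Module.finrank K (𝒜 d) = 1)
    (hpair : ∀ i, i ≤ d → ∀ x : A, x ∈ 𝒜 i → x ≠ 0 → ∃ y ∈ 𝒜 (d - i), x * y ≠ 0)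
    (hwlp : ∃ L, ∃ hL : L ∈ 𝒜 1, ∀ i,
      Module.finrank K (LinearMap.range (gradedMulBy 𝒜 L hL i)) =
        min (Module.finrank K (𝒜 i)) (Module.finrank K (𝒜 (i + 1)))) :
    ∃ k, k ≤ d ∧
      (∀ i j, i ≤ j → j ≤ k → Module.finrank K (𝒜 i) ≤ Module.finrank K (𝒜 j)) ∧
      (∀ i j, k ≤ i → i ≤ j → Module.finrank K (𝒜 j) ≤ Module.finrank K (𝒜 i)) ∧
      (∀ k', 1 ≤ k' → 2 * k' ≤ d →
        Module.finrank K (𝒜 (k' - 1)) ≤ Module.finrank K (𝒜 k')) := by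
  classical
  obtain ⟨L, hL, hrank⟩ := hwlp
  set h : ℕ → ℕ := fun i => Module.finrank K (𝒜 i) with hhdef
  -- Symmetry of the Hilbert function from Gorenstein duality
  have hsymm_le : ∀ i, i ≤ d → h i ≤ h (d - i) := by
    intro i hi
    have e : (𝒜 d) ≃ₗ[K] K := LinearEquiv.ofFinrankEq _ _ (by simp [hsocle])
    have hmem : ∀ (x : 𝒜 i) (y : 𝒜 (d - i)), (x : A) * y ∈ 𝒜 d := by
      intro x y
      have := SetLike.mul_mem_graded x.2 y.2
      rwa [Nat.add_sub_cancel' hi] at this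
    let B : 𝒜 i →ₗ[K] 𝒜 (d - i) →ₗ[K] K :=
      LinearMap.mk₂ K (fun x y => e ⟨(x : A) * y, hmem x y⟩)
        (by intro x x' y; rw [← map_add]; exact congrArg e (Subtype.ext (by simp [add_mul])))
        (by intro c x y; rw [← map_smul]; exact congrArg e (Subtype.ext (by simp [smul_mul_assoc])))
        (by intro x y y'; rw [← map_add]; exact congrArg e (Subtype.ext (by simp [mul_add])))
        (by intro c x y; rw [← map_smul]; exact congrArg e (Subtype.ext (by simp [mul_smul_comm])))
    apply finrank_le_of_pairing B
    intro x hx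
    obtain ⟨y, hy, hxy⟩ := hpair i hi x.1 x.2 (fun hc => hx (Subtype.ext hc))
    refine ⟨⟨y, hy⟩, ?_⟩
    simp only [B, LinearMap.mk₂_apply]
    rw [LinearEquiv.map_ne_zero_iff]
    exact fun hc => hxy (by simpa using congrArg Subtype.val hc)
  have hsymm : ∀ i, i ≤ d → h i = h (d - i) := by
    intro i hi
    refine le_antisymm (hsymm_le i hi) ?_
    have := hsymm_le (d - i) (Nat.sub_le d i)
    rwa [Nat.sub_sub_self hi] at this
  -- Dichotomy from WLP
  have hsur : ∀ i, h (i + 1) ≤ h i → Function.Surjective (gradedMulBy 𝒜 L hL i) := by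
    intro i hle
    apply LinearMap.range_eq_top.mp
    apply Submodule.eq_top_of_finrank_eq
    rw [hrank i, min_eq_right hle]
  have hmono : ∀ i, ¬ Function.Surjective (gradedMulBy 𝒜 L hL i) → h i ≤ h (i + 1) := by
    intro i hns
    by_contra hlt
    exact hns (hsur i (le_of_not_ge (fun hle => hlt (by omega))))
  have hle_of_surj : ∀ i, Function.Surjective (gradedMulBy 𝒜 L hL i) → h (i + 1) ≤ h i := by
    intro i hsurj
    have := LinearMap.finrank_range_le (gradedMulBy 𝒜 L hL i)
    rw [LinearMap.range_eq_top.mpr hsurj] at this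
    simpa using this
  -- Surjectivity propagates upward
  have hprop : ∀ i, Function.Surjective (gradedMulBy 𝒜 L hL i) →
      Function.Surjective (gradedMulBy 𝒜 L hL (i + 1)) := by
    intro i hs z
    have hz : (z : A) ∈ 𝒜 1 * 𝒜 (i + 1) := by rw [← hstd (i + 1)]; exact z.2
    have key : ∀ v ∈ 𝒜 1 * 𝒜 (i + 1), ∃ w ∈ 𝒜 (i + 1), L * w = v := by
      intro v hv
      refine Submodule.mul_induction_on hv ?_ ?_
      · intro a ha b hb
        obtain ⟨w, hw⟩ := hs ⟨b, hb⟩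
        have hw' : L * (w : A) = b := congrArg Subtype.val hw
        refine ⟨a * w, ?_, ?_⟩
        · rw [hstd i]; exact Submodule.mul_mem_mul ha w.2
        · rw [mul_left_comm, hw']
      · rintro v1 v2 ⟨w1, hw1, he1⟩ ⟨w2, hw2, he2⟩
        exact ⟨w1 + w2, add_mem hw1 hw2, by rw [mul_add, he1, he2]⟩
    obtain ⟨w, hw, he⟩ := key z.1 hz
    exact ⟨⟨w, hw⟩, Subtype.ext he⟩
  have hsurjd : Function.Surjective (gradedMulBy 𝒜 L hL d) := by
    intro z
    have : (z : A) = 0 := by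
      have hz : (z : A) ∈ (⊥ : Submodule K A) := by
        rw [← hart (d + 1) (lt_add_one d)]; exact z.2
      simpa using hz
    exact ⟨0, by rw [map_zero]; exact (Subtype.ext this).symm⟩
  -- once surjective, antitone thereafter
  have antiFrom : ∀ m, Function.Surjective (gradedMulBy 𝒜 L hL m) →
      ∀ i j, m ≤ i → i ≤ j → h j ≤ h i := by
    intro m hm
    have hall : ∀ i, m ≤ i → Function.Surjective (gradedMulBy 𝒜 L hL i) := by
      intro i hi
      induction i, hi using Nat.le_induction with
      | base => exact hm
      | succ n hn ih => exact hprop n ih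
    intro i j hmi hij
    induction j, hij using Nat.le_induction with
    | base => exact le_refl _
    | succ n hn ih => exact le_trans (hle_of_surj n (hall n (le_trans hmi hn))) ih
  -- choose k minimal with surjectivity
  have hex : ∃ i, Function.Surjective (gradedMulBy 𝒜 L hL i) := ⟨d, hsurjd⟩
  set k := Nat.find hex with hkdef
  have hkd : k ≤ d := Nat.find_le hsurjd
  have hk : Function.Surjective (gradedMulBy 𝒜 L hL k) := Nat.find_spec hex
  refine ⟨k, hkd, ?_, ?_, ?_⟩
  · intro i j hij hjk
    induction j, hij using Nat.le_induction with
    | base => exact le_refl _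
    | succ n hn ih =>
        refine le_trans (ih (by omega)) (hmono n ?_)
        exact Nat.find_min hex (by omega)
  · exact antiFrom k hk
  · intro k' h1 h2
    by_contra hcon
    push_neg at hcon
    have hcon' : h k' < h (k' - 1) := hcon
    have hsurj : Function.Surjective (gradedMulBy 𝒜 L hL (k' - 1)) := by
      apply hsur
      rw [Nat.sub_add_cancel h1]
      exact le_of_lt hcon'
    have hle : h (d + 1 - k') ≤ h k' :=
      antiFrom (k' - 1) hsurj k' (d + 1 - k') (by omega) (by omega)
    have heq : h (k' - 1) = h (d + 1 - k') := by
      have := hsymm (k' - 1) (by omega)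
      rwa [show d - (k' - 1) = d + 1 - k' by omega] at this
    omega
end

section
/- Let $d \geq 4$. For every Turan algebra of order $(a,\ldots,a)$ with $a$ sufficiently large, the Hilbert vector $h_k = \binom{d-1}{k}a^k + \binom{d-1}{d-k}a^{d-k}$ (with the convention $\binom{d-1}{j} = 0$ for $j > d-1$, and $h_0 = 1$) satisfies $h_1 > h_2$; in particular no linear form can give an injective multiplication map $A_1 \to A_2$. -/
lemma turan_aux (d a : ℕ) (hd : 4 ≤ d) (ha : d ^ 2 ≤ a) :
    (d - 1) * a + a ^ (d - 1) >
      Nat.choose (d - 1) 2 * a ^ 2 + Nat.choose (d - 1) (d - 2) * a ^ (d - 2) := by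
  have ha16 : 16 ≤ a := le_trans (by nlinarith) ha
  have hapos : 0 < a := by omega
  have h1 : Nat.choose (d - 1) 2 ≤ (d - 1) ^ 2 := by
    rw [Nat.choose_two_right]
    calc (d-1) * (d-1-1) / 2 ≤ (d-1) * (d-1-1) := Nat.div_le_self _ _
      _ ≤ (d-1) * (d-1) := Nat.mul_le_mul_left _ (Nat.sub_le _ _)
      _ = (d-1)^2 := (sq (d-1)).symm
  have h2 : Nat.choose (d - 1) (d - 2) = d - 1 := by
    have heq : d - 2 = (d - 1) - 1 := by omega
    rw [heq, Nat.choose_symm (by omega : 1 ≤ d - 1), Nat.choose_one_right]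
  have h3 : a ^ 2 ≤ a ^ (d - 2) := Nat.pow_le_pow_right hapos (by omega)
  have h4 : a ^ (d - 1) = a * a ^ (d - 2) := by
    rw [← pow_succ']
    congr 1; omega
  have h5 : ((d - 1) ^ 2 + (d - 1)) * a ^ (d - 2) < a * a ^ (d - 2) := by
    apply Nat.mul_lt_mul_of_lt_of_le ?_ le_rfl (Nat.pow_pos hapos)
    calc (d - 1) ^ 2 + (d - 1) < d ^ 2 := by
          obtain ⟨e, rfl⟩ : ∃ e, d = e + 1 := ⟨d - 1, by omega⟩
          simp only [Nat.add_sub_cancel]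
          nlinarith
      _ ≤ a := ha
  calc Nat.choose (d - 1) 2 * a ^ 2 + Nat.choose (d - 1) (d - 2) * a ^ (d - 2)
      ≤ (d - 1) ^ 2 * a ^ (d - 2) + (d - 1) * a ^ (d - 2) := by
        rw [h2]; gcongr
    _ = ((d - 1) ^ 2 + (d - 1)) * a ^ (d - 2) := by ring
    _ < a * a ^ (d - 2) := h5
    _ = a ^ (d - 1) := h4.symm
    _ ≤ (d - 1) * a + a ^ (d - 1) := Nat.le_add_left _ _

/-- for `d ≥ 4` and `a` sufficiently large, the Hilbert function of the
Turan algebra `TA(a,…,a)` satisfies `h₁ > h₂`, i.e.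
`(d-1)a + a^{d-1} > C(d-1,2)a² + C(d-1,d-2)a^{d-2}`; in particular no linear map from a
vector space of dimension `h₁` to one of dimension `h₂` can be injective. -/
theorem turan_h1_gt_h2_no_injection (d : ℕ) (hd : 4 ≤ d) :
    ∃ N : ℕ, ∀ a : ℕ, N ≤ a →
      ((d - 1) * a + a ^ (d - 1) >
          Nat.choose (d - 1) 2 * a ^ 2 + Nat.choose (d - 1) (d - 2) * a ^ (d - 2)) ∧
      (∀ (K V W : Type) [Field K] [AddCommGroup V] [Module K V] [AddCommGroup W]
          [Module K W], FiniteDimensional K V → FiniteDimensional K W →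
          Module.finrank K V = (d - 1) * a + a ^ (d - 1) →
          Module.finrank K W =
            Nat.choose (d - 1) 2 * a ^ 2 + Nat.choose (d - 1) (d - 2) * a ^ (d - 2) →
          ∀ φ : V →ₗ[K] W, ¬ Function.Injective φ) := by
  refine ⟨d ^ 2, fun a ha => ⟨turan_aux d a hd ha, ?_⟩⟩
  intro K V W _ _ _ _ _ hV hW hdV hdW φ hinj
  have := LinearMap.finrank_le_finrank_of_injective hinj
  rw [hdV, hdW] at this
  exact absurd this (Nat.not_le_of_gt (turan_aux d a hd ha))
end
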